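/- arXiv:1905.11963 — 2 statements merged into one kernel-verified Lean document; each statement's English description precedes it below -/
import Mathlib

section
/- Among all minimizers of ‖A·x − b‖₂, the vector x = A† · b has minimum Euclidean norm: for any y with ‖A·y − b‖₂ = ‖A·(A†·b) − b‖₂, we have ‖A†·b‖₂ ≤ ‖y‖₂. -/
open Matrix

noncomputable def l2norm {n : ℕ} (v : Fin n → ℝ) : ℝ := Real.sqrt (∑ i, v i ^ 2)

def IsMPInv {n m : ℕ} (A : Matrix (Fin n) (Fin m) ℝ) (B : Matrix (Fin m) (Fin n) ℝ) : Prop :=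
  A * B * A = A ∧ B * A * B = B ∧ (A * B)ᵀ = A * B ∧ (B * A)ᵀ = B * A

lemma l2norm_eq_sqrt_dot {n : ℕ} (v : Fin n → ℝ) : l2norm v = Real.sqrt (v ⬝ᵥ v) := by
  simp [l2norm, dotProduct, sq]

lemma dot_self_nonneg' {n : ℕ} (v : Fin n → ℝ) : 0 ≤ v ⬝ᵥ v :=
  Finset.sum_nonneg fun i _ => mul_self_nonneg _

lemma eq_zero_of_dot_self {n : ℕ} (v : Fin n → ℝ) (h : v ⬝ᵥ v = 0) : v = 0 := by
  funext i
  have := (Finset.sum_eq_zero_iff_of_nonneg (fun i _ => mul_self_nonneg (v i))).mp h i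
    (Finset.mem_univ i)
  exact mul_self_eq_zero.mp this

lemma mulVec_dot {n m : ℕ} (M : Matrix (Fin n) (Fin m) ℝ) (u : Fin m → ℝ) (v : Fin n → ℝ) :
    (M *ᵥ u) ⬝ᵥ v = u ⬝ᵥ (Mᵀ *ᵥ v) := by
  rw [dotProduct_comm, dotProduct_mulVec, ← mulVec_transpose, dotProduct_comm]

lemma pythagoras {n : ℕ} (a c : Fin n → ℝ) (h : a ⬝ᵥ c = 0) :
    (a + c) ⬝ᵥ (a + c) = a ⬝ᵥ a + c ⬝ᵥ c := by
  have h' : c ⬝ᵥ a = 0 := by rw [dotProduct_comm]; exact h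
  simp [add_dotProduct, dotProduct_add, h, h']

theorem stmt_1 {n m : ℕ} (A : Matrix (Fin n) (Fin m) ℝ) (Ad : Matrix (Fin m) (Fin n) ℝ)
    (hA : IsMPInv A Ad) (b : Fin n → ℝ) :
    ∀ y : Fin m → ℝ,
      l2norm (A.mulVec y - b) = l2norm (A.mulVec (Ad.mulVec b) - b) →
      l2norm (Ad.mulVec b) ≤ l2norm y := by
  obtain ⟨h1, h2, h3, h4⟩ := hA
  intro y hy
  set x : Fin m → ℝ := Ad.mulVec b with hxdef
  -- Aᵀ kills the residual
  have hres : Aᵀ *ᵥ (A *ᵥ x - b) = 0 := by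
    have hAtP : Aᵀ * (A * Ad) = Aᵀ := by
      calc Aᵀ * (A * Ad) = Aᵀ * (A * Ad)ᵀ := by rw [h3]
        _ = (A * Ad * A)ᵀ := by rw [← transpose_mul]
        _ = Aᵀ := by rw [h1]
    have : Aᵀ *ᵥ (A *ᵥ x) = Aᵀ *ᵥ b := by
      rw [hxdef, mulVec_mulVec, mulVec_mulVec, Matrix.mul_assoc, hAtP]
    rw [mulVec_sub, this, sub_self]
  have key1 : ∀ u : Fin m → ℝ, (A *ᵥ u) ⬝ᵥ (A *ᵥ x - b) = 0 := by
    intro u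
    rw [mulVec_dot, hres, dotProduct_zero]
  -- equality of squared residuals
  have hsq : (A *ᵥ y - b) ⬝ᵥ (A *ᵥ y - b) = (A *ᵥ x - b) ⬝ᵥ (A *ᵥ x - b) := by
    have := hy
    rw [l2norm_eq_sqrt_dot, l2norm_eq_sqrt_dot] at this
    exact (Real.sqrt_inj (dot_self_nonneg' _) (dot_self_nonneg' _)).mp this
  have hdecomp : A *ᵥ y - b = A *ᵥ (y - x) + (A *ᵥ x - b) := by
    rw [mulVec_sub]; abel
  have hAyx : A *ᵥ (y - x) = 0 := by
    have hp := pythagoras (A *ᵥ (y - x)) (A *ᵥ x - b) (key1 _)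
    rw [← hdecomp, hsq] at hp
    have : (A *ᵥ (y - x)) ⬝ᵥ (A *ᵥ (y - x)) = 0 := by linarith
    exact eq_zero_of_dot_self _ this
  -- x ⟂ (y - x)
  have hQx : (Ad * A) *ᵥ x = x := by
    rw [hxdef, mulVec_mulVec, h2]
  have hxorth : x ⬝ᵥ (y - x) = 0 := by
    calc x ⬝ᵥ (y - x) = ((Ad * A) *ᵥ x) ⬝ᵥ (y - x) := by rw [hQx]
      _ = x ⬝ᵥ ((Ad * A)ᵀ *ᵥ (y - x)) := mulVec_dot _ _ _
      _ = x ⬝ᵥ ((Ad * A) *ᵥ (y - x)) := by rw [h4]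
      _ = x ⬝ᵥ (Ad *ᵥ (A *ᵥ (y - x))) := by rw [← mulVec_mulVec]
      _ = 0 := by rw [hAyx, mulVec_zero, dotProduct_zero]
  -- conclude
  have hy_decomp : y = x + (y - x) := by abel
  have hp := pythagoras x (y - x) hxorth
  rw [← hy_decomp] at hp
  rw [l2norm_eq_sqrt_dot, l2norm_eq_sqrt_dot]
  apply Real.sqrt_le_sqrt
  rw [hp]
  have := dot_self_nonneg' (y - x)
  linarith
end

section
/- Let A be a matrix with Moore-Penrose pseudoinverse A†, and suppose c ∈ range(A) with c = A·k for k = A†·c, and assume 1 + dᵀ·A†·c ≠ 0 and d ∈ range(Aᵀ). Then (A + c·dᵀ)† = A† − (A†·c·dᵀ·A†)/(1 + dᵀ·A†·c), i.e., this formula satisfies the four Moore-Penrose conditions for A + c·dᵀ. -/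
open Matrix

/-!
Write `V = c dᵀ` and `s = dᵀ A† c`. Since `c ∈ range A` and `d ∈ range Aᵀ`, the projections
`A A†` and `A† A` fix `V` from the left and the right, and `V A† V = s V`. Hence
`(A + V) A† V A† = (1 + s) V A†`, so the correction term cancels exactly and
`(A + V) B = A A†`, `B (A + V) = A† A` for `B = A† - (1 + s)⁻¹ A† V A†`.
The Moore–Penrose conditions for `(A + V, B)` are then inherited from those for `(A, A†)`.
-/

theorem vecMulVec_mul_mul_vecMulVec {l m n p : Type*} [Fintype m] [Fintype n] {R : Type*}
    [CommSemiring R] (u : l → R) (v : m → R) (M : Matrix m n R) (w : n → R) (x : p → R) :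
    vecMulVec u v * M * vecMulVec w x = (v ⬝ᵥ M *ᵥ w) • vecMulVec u x := by
  rw [Matrix.mul_assoc, mul_vecMulVec, vecMulVec_mul_vecMulVec, vecMulVec_smul]

section ShermanMorrison

variable {m n : Type*} [Fintype m] [Fintype n] {K : Type*} [Field K]

def shermanMorrison (Ad : Matrix m n K) (V : Matrix n m K) (s : K) : Matrix m n K :=
  Ad - (1 + s)⁻¹ • (Ad * V * Ad)

variable {A : Matrix n m K} {Ad : Matrix m n K} {V : Matrix n m K} {s : K}

theorem add_mul_shermanMorrison (hAV : A * Ad * V = V) (hV : V * Ad * V = s • V)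
    (hs : 1 + s ≠ 0) : (A + V) * shermanMorrison Ad V s = A * Ad := by
  have key : (A + V) * (Ad * V * Ad) = (1 + s) • (V * Ad) := by
    rw [Matrix.add_mul, ← Matrix.mul_assoc, ← Matrix.mul_assoc, hAV, ← Matrix.mul_assoc,
      ← Matrix.mul_assoc, hV, Matrix.smul_mul, add_smul, one_smul]
  rw [shermanMorrison, Matrix.mul_sub, Matrix.mul_smul, key, smul_smul, inv_mul_cancel₀ hs,
    one_smul, Matrix.add_mul, add_sub_cancel_right]

theorem shermanMorrison_mul_add (hVA : V * Ad * A = V) (hV : V * Ad * V = s • V)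
    (hs : 1 + s ≠ 0) : shermanMorrison Ad V s * (A + V) = Ad * A := by
  have key : Ad * V * Ad * (A + V) = (1 + s) • (Ad * V) := by
    simp only [Matrix.mul_add, Matrix.mul_assoc] at hVA hV ⊢
    rw [hVA, hV, Matrix.mul_smul, add_smul, one_smul]
  rw [shermanMorrison, Matrix.sub_mul, Matrix.smul_mul, key, smul_smul, inv_mul_cancel₀ hs,
    one_smul, Matrix.mul_add, add_sub_cancel_right]

theorem mul_mul_shermanMorrison (hAd : Ad * A * Ad = Ad) :
    Ad * A * shermanMorrison Ad V s = shermanMorrison Ad V s := by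
  rw [shermanMorrison, Matrix.mul_sub, hAd, Matrix.mul_smul, ← Matrix.mul_assoc,
    ← Matrix.mul_assoc, hAd]

end ShermanMorrison

theorem isMPInv_of_mul_eq {n m : ℕ} {A : Matrix (Fin n) (Fin m) ℝ} {B : Matrix (Fin m) (Fin n) ℝ}
    {P : Matrix (Fin n) (Fin n) ℝ} {Q : Matrix (Fin m) (Fin m) ℝ} (hP : Pᵀ = P) (hQ : Qᵀ = Q)
    (hAB : A * B = P) (hBA : B * A = Q) (hPA : P * A = A) (hQB : Q * B = B) :
    IsMPInv A B :=
  ⟨by rw [hAB, hPA], by rw [hBA, hQB], by rw [hAB, hP], by rw [hBA, hQ]⟩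

theorem stmt_19 {n m : ℕ} (A : Matrix (Fin n) (Fin m) ℝ) (Ad : Matrix (Fin m) (Fin n) ℝ)
    (hA : IsMPInv A Ad) (c : Fin n → ℝ) (d : Fin m → ℝ)
    (hc : (A * Ad).mulVec c = c)          -- c ∈ range(A)
    (hd : (Ad * A).mulVec d = d)          -- d ∈ range(Aᵀ)
    (hβ : 1 + d ⬝ᵥ Ad.mulVec c ≠ 0) :
    IsMPInv (A + Matrix.vecMulVec c d)
      (Ad - (1 + d ⬝ᵥ Ad.mulVec c)⁻¹ • (Ad * Matrix.vecMulVec c d * Ad)) := by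
  obtain ⟨hAAdA, hAdAAd, hAAd, hAdA⟩ := hA
  have hAV : A * Ad * vecMulVec c d = vecMulVec c d := by rw [mul_vecMulVec, hc]
  have hVA : vecMulVec c d * Ad * A = vecMulVec c d := by
    rw [Matrix.mul_assoc, vecMulVec_mul, ← mulVec_transpose, hAdA, hd]
  have hVV := vecMulVec_mul_mul_vecMulVec c d Ad c d
  refine isMPInv_of_mul_eq hAAd hAdA (add_mul_shermanMorrison hAV hVV hβ)
    (shermanMorrison_mul_add hVA hVV hβ) ?_ (mul_mul_shermanMorrison hAdAAd)
  rw [Matrix.mul_add, hAAdA, hAV]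
end
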